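/- arXiv:2404.17898 — 3 statements merged into one kernel-verified Lean document; each statement's English description precedes it below -/
import Mathlib

section
/- Let A : ℝ → ℝ be convex and even with A(0) = 0, differentiable on [0,∞) with derivative a = A'. Then for every t ≥ 0 and every s ∈ ℝ one has s·a(t) − A(s) ≤ A(2t); equivalently, the conjugate function Ã satisfies Ã(a(t)) ≤ A(2t) for all t ≥ 0. -/
/-!
An even convex function is nondecreasing on `[0, ∞)`, so `A ≥ A 0 = 0` there and `a t ≥ 0`;
hence `s * a t - A s ≤ |s| * a t - A |s|` and one may take `s ≥ 0`. The tangent line of `A`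
at `t` lies below `A`, which at `s` gives `s * a t - A s ≤ t * a t - A t` and at `2 t` gives
`t * a t ≤ A (2 t) - A t`; adding them and using `A t ≥ 0` yields the bound.
-/

open Set Filter

lemma Function.Even.apply_abs {α β : Type*} [AddGroup α] [LinearOrder α] {f : α → β}
    (hf : f.Even) (x : α) : f |x| = f x := by
  rcases abs_choice x with h | h <;> simp [h, hf.eq]

lemma accPt_principal_Ici {α : Type*} [TopologicalSpace α] [LinearOrder α] [OrderTopology α]
    [DenselyOrdered α] [NoMaxOrder α] {a x : α} (hx : a ≤ x) : AccPt x (𝓟 (Ici a)) :=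
  accPt_principal_iff_nhdsWithin.mpr <|
    (nhdsGT_neBot x).mono <| nhdsWithin_mono x fun _ hy ↦ ⟨hx.trans hy.le, ne_of_gt hy⟩

lemma ConvexOn.monotoneOn_Ici_of_even {f : ℝ → ℝ} (hf : ConvexOn ℝ univ f) (he : f.Even) :
    MonotoneOn f (Ici 0) := fun x hx y _ hxy ↦ by
  simpa [he.eq] using hf.le_max_of_mem_Icc (mem_univ (-y)) (mem_univ y)
    ⟨by linarith [mem_Ici.mp hx], hxy⟩

lemma ConvexOn.mul_sub_le_sub_of_hasDerivWithinAt {S : Set ℝ} {f : ℝ → ℝ} {x y f' : ℝ}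
    (hf : ConvexOn ℝ S f) (hx : x ∈ S) (hy : y ∈ S) (hf' : HasDerivWithinAt f f' S x) :
    f' * (y - x) ≤ f y - f x := by
  rcases lt_trichotomy x y with hxy | rfl | hyx
  · have := hf.le_slope_of_hasDerivWithinAt hx hy hxy hf'
    rwa [slope_def_field, le_div_iff₀ (sub_pos.mpr hxy)] at this
  · simp
  · have := hf.slope_le_of_hasDerivWithinAt hy hx hyx hf'
    rw [slope_def_field, div_le_iff₀ (sub_pos.mpr hyx)] at this
    linarith

/-- Lemma (conjugate bound a): if `A` is convex, even, `A(0) = 0` and `A` is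
differentiable on `[0,∞)` with derivative `a`, then for every `t ≥ 0` and
every `s ∈ ℝ`, `s·a(t) − A(s) ≤ A(2t)`; i.e. `Ã(a(t)) ≤ A(2t)`. -/
theorem conjugate_deriv_bound (A a : ℝ → ℝ)
    (hA_convex : ConvexOn ℝ Set.univ A)
    (hA_even : ∀ s : ℝ, A (-s) = A s)
    (hA_zero : A 0 = 0)
    (hA_diff : ∀ t : ℝ, 0 ≤ t → HasDerivWithinAt A (a t) (Set.Ici 0) t) :
    ∀ t : ℝ, 0 ≤ t → ∀ s : ℝ, s * a t - A s ≤ A (2 * t) := by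
  intro t ht s
  have hA_mono : MonotoneOn A (Ici 0) := hA_convex.monotoneOn_Ici_of_even hA_even
  have ha : 0 ≤ a t := (hA_diff t ht).nonneg_of_monotoneOn (accPt_principal_Ici ht) hA_mono
  have hAt : 0 ≤ A t := hA_zero ▸ hA_mono self_mem_Ici ht ht
  have hsub : ∀ y, 0 ≤ y → a t * (y - t) ≤ A y - A t := fun y hy ↦
    (hA_convex.subset (subset_univ _) (convex_Ici 0)).mul_sub_le_sub_of_hasDerivWithinAt
      ht hy (hA_diff t ht)
  have habs := hsub |s| (abs_nonneg s)
  have htwo := hsub (2 * t) (by linarith)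
  calc s * a t - A s ≤ |s| * a t - A |s| := by
        rw [Function.Even.apply_abs hA_even]; gcongr; exact le_abs_self s
    _ ≤ A (2 * t) := by linarith
end

section
/- For every real p ≥ 2 and all vectors w₁, w₂ ∈ ℝ^N, one has ⟨|w₁|^{p−2}·w₁ − |w₂|^{p−2}·w₂, w₁ − w₂⟩ ≥ (1/(p·2^{p−3}))·|w₁ − w₂|^p, where ⟨·,·⟩ is the Euclidean inner product and |·| the Euclidean norm. -/
/-!
Put `c = 1 / (p 2^{p-3})`, `x = ‖v‖`, `y = ‖w‖`, `d = ‖v - w‖`. Since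
`⟪v, w⟫ = (x² + y² - d²) / 2`, the right-hand side is an affine function of `d²`, while
`c d^p = c (d²)^{p/2}` is convex in `d²`; and the triangle inequality confines `d²` to
`[(x - y)², (x + y)²]`. So it suffices to check the two endpoints, the collinear configurations.
At `d = |x - y|` the claim is `c |x - y|^p ≤ (x - y)(x^{p-1} - y^{p-1})`, which follows from
`c ≤ 1` and superadditivity of `t ↦ t^{p-1}`; at `d = x + y` it is
`c (x + y)^p ≤ (x + y)(x^{p-1} + y^{p-1})`, which follows from the power mean inequality
`(x + y)^{p-1} ≤ 2^{p-2}(x^{p-1} + y^{p-1})` and `c 2^{p-2} = 2 / p ≤ 1`.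
-/

open RealInnerProductSpace

noncomputable def simonConst (p : ℝ) : ℝ := 1 / (p * 2 ^ (p - 3))

variable {p x y : ℝ}

lemma simonConst_nonneg (hp : 0 ≤ p) : 0 ≤ simonConst p := by
  unfold simonConst; positivity

lemma simonConst_mul_two_rpow (hp : p ≠ 0) : simonConst p * 2 ^ (p - 2) = 2 / p := by
  have : (2 : ℝ) ^ (p - 3) ≠ 0 := by positivity
  rw [simonConst, show p - 2 = p - 3 + 1 by ring, Real.rpow_add_one two_ne_zero]
  field_simp

lemma simonConst_le_one (hp : 2 ≤ p) : simonConst p ≤ 1 :=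
  calc simonConst p ≤ simonConst p * 2 ^ (p - 2) :=
        le_mul_of_one_le_right (simonConst_nonneg (by linarith))
          (Real.one_le_rpow one_le_two (by linarith))
    _ = 2 / p := simonConst_mul_two_rpow (by linarith)
    _ ≤ 1 := (div_le_one (by linarith)).2 hp

lemma rpow_sub_two_mul_self (hx : 0 ≤ x) (hp : p - 1 ≠ 0) : x ^ (p - 2) * x = x ^ (p - 1) := by
  rw [← Real.rpow_add_one' hx (by rwa [show p - 2 + 1 = p - 1 by ring])]
  ring_nf

lemma mul_rpow_sub_one (hx : 0 ≤ x) (hp : p ≠ 0) : x * x ^ (p - 1) = x ^ p := by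
  rw [← Real.rpow_one_add' hx (by rwa [add_sub_cancel]), add_sub_cancel]

lemma simonConst_mul_abs_sub_rpow_le (hp : 2 ≤ p) (hx : 0 ≤ x) (hy : 0 ≤ y) :
    simonConst p * |x - y| ^ p ≤ (x - y) * (x ^ (p - 1) - y ^ (p - 1)) := by
  wlog hxy : y ≤ x generalizing x y
  · rw [abs_sub_comm]
    linear_combination this hy hx (le_of_not_ge hxy)
  have hsub : 0 ≤ x - y := sub_nonneg.2 hxy
  have hsuper : (x - y) ^ (p - 1) + y ^ (p - 1) ≤ x ^ (p - 1) := by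
    simpa using Real.add_rpow_le_rpow_add hsub hy (by linarith : 1 ≤ p - 1)
  rw [abs_of_nonneg hsub]
  calc simonConst p * (x - y) ^ p ≤ (x - y) ^ p :=
        mul_le_of_le_one_left (by positivity) (simonConst_le_one hp)
    _ = (x - y) * (x - y) ^ (p - 1) := (mul_rpow_sub_one hsub (by linarith)).symm
    _ ≤ (x - y) * (x ^ (p - 1) - y ^ (p - 1)) := by gcongr; linarith

lemma simonConst_mul_add_rpow_le (hp : 2 ≤ p) (hx : 0 ≤ x) (hy : 0 ≤ y) :
    simonConst p * (x + y) ^ p ≤ (x + y) * (x ^ (p - 1) + y ^ (p - 1)) := by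
  have hmean : (x + y) ^ (p - 1) ≤ 2 ^ (p - 2) * (x ^ (p - 1) + y ^ (p - 1)) := by
    lift x to NNReal using hx
    lift y to NNReal using hy
    have := NNReal.rpow_add_le_mul_rpow_add_rpow x y (by linarith : 1 ≤ p - 1)
    rw [show p - 1 - 1 = p - 2 by ring] at this
    exact_mod_cast this
  have hc := simonConst_nonneg (by linarith : 0 ≤ p)
  calc simonConst p * (x + y) ^ p = simonConst p * ((x + y) * (x + y) ^ (p - 1)) := by
        rw [mul_rpow_sub_one (by positivity) (by linarith)]
    _ ≤ simonConst p * ((x + y) * (2 ^ (p - 2) * (x ^ (p - 1) + y ^ (p - 1)))) := by gcongr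
    _ = 2 / p * ((x + y) * (x ^ (p - 1) + y ^ (p - 1))) := by
        rw [← simonConst_mul_two_rpow (by linarith)]; ring
    _ ≤ (x + y) * (x ^ (p - 1) + y ^ (p - 1)) :=
        mul_le_of_le_one_left (by positivity) ((div_le_one (by linarith)).2 hp)

lemma rpow_div_two_sq (d p : ℝ) : (d ^ 2) ^ (p / 2) = |d| ^ p := by
  rw [Real.rpow_div_two_eq_sqrt p (sq_nonneg d), Real.sqrt_sq_eq_abs]

lemma simonConst_mul_rpow_le_of_abs_sub_le_of_le_add {d : ℝ} (hp : 2 ≤ p) (hx : 0 ≤ x)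
    (hy : 0 ≤ y) (hd₁ : |x - y| ≤ d) (hd₂ : d ≤ x + y) :
    simonConst p * d ^ p ≤ x ^ (p - 2) * x ^ 2 + y ^ (p - 2) * y ^ 2
      - (x ^ (p - 2) + y ^ (p - 2)) * ((x ^ 2 + y ^ 2 - d ^ 2) / 2) := by
  set a := x ^ (p - 2)
  set b := y ^ (p - 2)
  let g : ℝ → ℝ := fun t ↦ a * x ^ 2 + b * y ^ 2 - (a + b) * ((x ^ 2 + y ^ 2 - t) / 2)
  have hg : ConcaveOn ℝ (Set.Ici 0) g := ⟨convex_Ici 0, fun _ _ _ _ α β _ _ hαβ ↦ by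
    simp only [g, smul_eq_mul]
    linear_combination (a * x ^ 2 + b * y ^ 2 - (a + b) * (x ^ 2 + y ^ 2) / 2) * hαβ⟩
  let f := (fun t : ℝ ↦ simonConst p • t ^ (p / 2)) - g
  have hf : ConvexOn ℝ (Set.Ici 0) f :=
    ((convexOn_rpow (by linarith)).smul (simonConst_nonneg (by linarith))).sub hg
  have hd : 0 ≤ d := (abs_nonneg _).trans hd₁
  have hseg : d ^ 2 ∈ segment ℝ ((x - y) ^ 2) ((x + y) ^ 2) := by
    rw [segment_eq_Icc (by nlinarith), ← sq_abs (x - y)]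
    exact ⟨pow_le_pow_left₀ (abs_nonneg _) hd₁ 2, pow_le_pow_left₀ hd hd₂ 2⟩
  have hx₁ : a * x = x ^ (p - 1) := rpow_sub_two_mul_self hx (by linarith)
  have hy₁ : b * y = y ^ (p - 1) := rpow_sub_two_mul_self hy (by linarith)
  have hf₀ : f ((x - y) ^ 2) ≤ 0 := by
    have := simonConst_mul_abs_sub_rpow_le hp hx hy
    simp only [f, g, Pi.sub_apply, smul_eq_mul, rpow_div_two_sq]
    rw [← hx₁, ← hy₁] at this
    linear_combination this
  have hf₁ : f ((x + y) ^ 2) ≤ 0 := by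
    have := simonConst_mul_add_rpow_le hp hx hy
    simp only [f, g, Pi.sub_apply, smul_eq_mul, rpow_div_two_sq, abs_of_nonneg (add_nonneg hx hy)]
    rw [← hx₁, ← hy₁] at this
    linear_combination this
  have := (hf.le_on_segment (Set.mem_Ici.2 (sq_nonneg _)) (Set.mem_Ici.2 (sq_nonneg _))
    hseg).trans (max_le hf₀ hf₁)
  simp only [f, g, Pi.sub_apply, smul_eq_mul, rpow_div_two_sq, abs_of_nonneg hd] at this
  linarith

theorem simonConst_mul_norm_sub_rpow_le_inner {E : Type*} [NormedAddCommGroup E]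
    [InnerProductSpace ℝ E] (hp : 2 ≤ p) (v w : E) :
    simonConst p * ‖v - w‖ ^ p ≤ ⟪‖v‖ ^ (p - 2) • v - ‖w‖ ^ (p - 2) • w, v - w⟫ := by
  have hinner : ⟪v, w⟫ = (‖v‖ ^ 2 + ‖w‖ ^ 2 - ‖v - w‖ ^ 2) / 2 := by
    rw [norm_sub_sq_real]; ring
  have hexpand : ⟪‖v‖ ^ (p - 2) • v - ‖w‖ ^ (p - 2) • w, v - w⟫ = ‖v‖ ^ (p - 2) * ‖v‖ ^ 2
      + ‖w‖ ^ (p - 2) * ‖w‖ ^ 2 - (‖v‖ ^ (p - 2) + ‖w‖ ^ (p - 2)) * ⟪v, w⟫ := by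
    simp only [inner_sub_left, inner_sub_right, real_inner_smul_left,
      real_inner_self_eq_norm_sq, real_inner_comm v w]
    ring
  rw [hexpand, hinner]
  exact simonConst_mul_rpow_le_of_abs_sub_le_of_le_add hp (norm_nonneg v) (norm_nonneg w)
    (abs_norm_sub_norm_le v w) (norm_sub_le v w)

/-- Simon's monotonicity inequality for the `p`-Laplacian vector field
`w ↦ |w|^{p−2}w` on `ℝ^N`, for `p ≥ 2`:
`⟨|w₁|^{p−2}w₁ − |w₂|^{p−2}w₂, w₁ − w₂⟩ ≥ (1/(p·2^{p−3}))·|w₁ − w₂|^p`. -/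
theorem simon_inequality (N : ℕ) (p : ℝ) (hp : 2 ≤ p)
    (w₁ w₂ : EuclideanSpace ℝ (Fin N)) :
    (1 / (p * (2:ℝ) ^ (p - 3))) * ‖w₁ - w₂‖ ^ p ≤
      ⟪‖w₁‖ ^ (p - 2) • w₁ - ‖w₂‖ ^ (p - 2) • w₂, w₁ - w₂⟫ :=
  simonConst_mul_norm_sub_rpow_le_inner hp w₁ w₂
end

section
/- For all vectors a, b ∈ ℝ^N one has e^{|a|²} − e^{|b|²} − 2e^{|b|²}·⟨b, a − b⟩ ≥ |a − b|², where ⟨·,·⟩ is the Euclidean inner product and |·| the Euclidean norm. Equivalently, with Φ(s) = e^{s²} − 1, the map a ↦ Φ(|a|) satisfies Φ(|a|) − Φ(|b|) − ⟨∇(Φ∘|·|)(b), a − b⟩ ≥ |a − b|², i.e., the exponential energy density is 2-strongly convex. -/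
open RealInnerProductSpace

/-! The tangent line inequality `e^x ≥ e^y (1 + x - y)` bounds the left-hand side below by
`e^{|b|²}(|a|² - |b|² - 2⟨b, a - b⟩) = e^{|b|²} |a - b|²`, and `e^{|b|²} ≥ 1`. -/

theorem Real.exp_mul_sub_le_exp_sub_exp (x y : ℝ) :
    Real.exp y * (x - y) ≤ Real.exp x - Real.exp y := by
  have htangent : x - y + 1 ≤ Real.exp (x - y) := Real.add_one_le_exp (x - y)
  have hsplit : Real.exp x = Real.exp (x - y) * Real.exp y := by
    rw [← Real.exp_add, sub_add_cancel]
  nlinarith [mul_le_mul_of_nonneg_right htangent (Real.exp_pos y).le]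

theorem norm_sq_sub_norm_sq_sub_two_inner {E : Type*} [NormedAddCommGroup E]
    [InnerProductSpace ℝ E] (a b : E) :
    ‖a‖ ^ 2 - ‖b‖ ^ 2 - 2 * ⟪b, a - b⟫ = ‖a - b‖ ^ 2 := by
  rw [norm_sub_sq_real, inner_sub_right, real_inner_comm, real_inner_self_eq_norm_sq]
  ring

theorem norm_sub_sq_le_exp_norm_sq_bregman {E : Type*} [NormedAddCommGroup E]
    [InnerProductSpace ℝ E] (a b : E) :
    ‖a - b‖ ^ 2 ≤
      Real.exp (‖a‖ ^ 2) - Real.exp (‖b‖ ^ 2) - 2 * Real.exp (‖b‖ ^ 2) * ⟪b, a - b⟫ :=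
  calc ‖a - b‖ ^ 2
      ≤ Real.exp (‖b‖ ^ 2) * ‖a - b‖ ^ 2 :=
        le_mul_of_one_le_left (sq_nonneg _) (Real.one_le_exp (sq_nonneg _))
    _ = Real.exp (‖b‖ ^ 2) * (‖a‖ ^ 2 - ‖b‖ ^ 2) - 2 * Real.exp (‖b‖ ^ 2) * ⟪b, a - b⟫ := by
        rw [← norm_sq_sub_norm_sq_sub_two_inner]; ring
    _ ≤ Real.exp (‖a‖ ^ 2) - Real.exp (‖b‖ ^ 2) - 2 * Real.exp (‖b‖ ^ 2) * ⟪b, a - b⟫ := by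
        gcongr; exact Real.exp_mul_sub_le_exp_sub_exp _ _

/-- Pointwise 2-strong convexity of the exponential energy density: for all
`a, b ∈ ℝ^N`,
`e^{|a|²} − e^{|b|²} − 2e^{|b|²}⟨b, a − b⟩ ≥ |a − b|²`, i.e. with
`Φ(s) = e^{s²} − 1`, `Φ(|a|) − Φ(|b|) − ⟨∇(Φ∘|·|)(b), a − b⟩ ≥ |a − b|²`. -/
theorem exp_energy_strongly_convex (N : ℕ) (a b : EuclideanSpace ℝ (Fin N)) :
    ‖a - b‖ ^ 2 ≤
      Real.exp (‖a‖ ^ 2) - Real.exp (‖b‖ ^ 2) -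
        2 * Real.exp (‖b‖ ^ 2) * ⟪b, a - b⟫ :=
  norm_sub_sq_le_exp_norm_sq_bregman a b
end
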